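/- Let G be a finite simple graph, d ≥ 1 an integer, and let {C₁, …, C_r} be a partition of V(G) into cliques, each of which has size 1 or size at least 2d+1. Then for every d-cut (A, B) of G there is a partition I ⊎ J = {1, …, r} of the index set such that A = ⋃_{i ∈ I} Cᵢ and B = ⋃_{j ∈ J} C_j; equivalently, each clique Cᵢ is contained entirely in A or entirely in B. -/

import Mathlib

variable {V : Type*}

/-- A `d`-cut of a simple graph `G`: a partition `(A, B)` of the vertex set into two
nonempty parts such that every vertex of `A` has at most `d` neighbors in `B` and
every vertex of `B` has at most `d` neighbors in `A`. -/
def IsDCut (G : SimpleGraph V) (d : ℕ) (A B : Set V) : Prop :=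
  A.Nonempty ∧ B.Nonempty ∧ Disjoint A B ∧ A ∪ B = Set.univ ∧
    (∀ v ∈ A, (G.neighborSet v ∩ B).ncard ≤ d) ∧
    (∀ v ∈ B, (G.neighborSet v ∩ A).ncard ≤ d)

/-- A vertex set `T` is monochromatic if every `d`-cut of `G` has `T` entirely on one side. -/
def Monochromatic (G : SimpleGraph V) (d : ℕ) (T : Set V) : Prop :=
  ∀ A B : Set V, IsDCut G d A B → T ⊆ A ∨ T ⊆ B

/-- The edge cut of a cut `(A, B)`: the set of edges of `G` with one endpoint in `A`
and the other endpoint in `B`. -/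
def edgeCut (G : SimpleGraph V) (A B : Set V) : Set (Sym2 V) :=
  {e | e ∈ G.edgeSet ∧ ∃ u v, e = s(u, v) ∧ u ∈ A ∧ v ∈ B}

/-- A minimal `d`-cut: no `d`-cut has an edge cut that is a proper subset of its edge cut. -/
def IsMinimalDCut (G : SimpleGraph V) (d : ℕ) (A B : Set V) : Prop :=
  IsDCut G d A B ∧ ∀ A' B' : Set V, IsDCut G d A' B' → ¬ edgeCut G A' B' ⊂ edgeCut G A B

/-- A maximal `d`-cut: no `d`-cut has an edge cut that properly contains its edge cut. -/
def IsMaximalDCut (G : SimpleGraph V) (d : ℕ) (A B : Set V) : Prop :=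
  IsDCut G d A B ∧ ∀ A' B' : Set V, IsDCut G d A' B' → ¬ edgeCut G A B ⊂ edgeCut G A' B'

/-- If the vertex set of `G` is partitioned into cliques `C 1, …, C r`, each of size `1`
or of size at least `2d+1`, then for every `d`-cut `(A, B)` each clique lies entirely in
`A` or entirely in `B`; equivalently, there is a set `I` of indices with
`A = ⋃ i ∈ I, C i` and `B = ⋃ i ∈ Iᶜ, C i`. -/
theorem clique_partition_dcut_structure [Fintype V] (G : SimpleGraph V) (d : ℕ)
    (hd : 1 ≤ d) (r : ℕ) (C : Fin r → Set V)
    (hclique : ∀ i, G.IsClique (C i))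
    (hsize : ∀ i, (C i).ncard = 1 ∨ 2 * d + 1 ≤ (C i).ncard)
    (hdisj : Pairwise (Function.onFun Disjoint C)) (hcover : ⋃ i, C i = Set.univ) :
    ∀ A B : Set V, IsDCut G d A B →
      (∀ i, C i ⊆ A ∨ C i ⊆ B) ∧
      ∃ I : Set (Fin r), A = ⋃ i ∈ I, C i ∧ B = ⋃ i ∈ Iᶜ, C i := by
  intro A B hcut
  obtain ⟨hAne, hBne, hdisjAB, hcov, hA, hB⟩ := hcut
  have hmem : ∀ v : V, v ∈ A ∨ v ∈ B := by
    intro v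
    have : v ∈ A ∪ B := by rw [hcov]; trivial
    exact this
  have key : ∀ i, C i ⊆ A ∨ C i ⊆ B := by
    intro i
    by_contra h
    push_neg at h
    obtain ⟨hnA, hnB⟩ := h
    obtain ⟨x, hxC, hxA⟩ := Set.not_subset.mp hnA
    obtain ⟨y, hyC, hyB⟩ := Set.not_subset.mp hnB
    have hxB : x ∈ B := (hmem x).resolve_left hxA
    have hyA : y ∈ A := (hmem y).resolve_right hyB
    rcases hsize i with h1 | h2
    · obtain ⟨z, hz⟩ := Set.ncard_eq_one.mp h1
      rw [hz] at hxC hyC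
      rw [Set.mem_singleton_iff] at hxC hyC
      subst hxC; subst hyC
      exact hdisjAB.ne_of_mem hyA hxB rfl
    · have hsubB : C i ∩ B ⊆ G.neighborSet y ∩ B := by
        rintro z ⟨hzC, hzB⟩
        refine ⟨hclique i hyC hzC ?_, hzB⟩
        exact hdisjAB.ne_of_mem hyA hzB
      have hsubA : C i ∩ A ⊆ G.neighborSet x ∩ A := by
        rintro z ⟨hzC, hzA⟩
        refine ⟨hclique i hxC hzC ?_, hzA⟩
        exact (hdisjAB.ne_of_mem hzA hxB).symm
      have hB' : (C i ∩ B).ncard ≤ d :=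
        le_trans (Set.ncard_le_ncard hsubB (Set.toFinite _)) (hA y hyA)
      have hA' : (C i ∩ A).ncard ≤ d :=
        le_trans (Set.ncard_le_ncard hsubA (Set.toFinite _)) (hB x hxB)
      have hsplit : C i = (C i ∩ A) ∪ (C i ∩ B) := by
        rw [← Set.inter_union_distrib_left, hcov, Set.inter_univ]
      have hdis : Disjoint (C i ∩ A) (C i ∩ B) :=
        Disjoint.mono Set.inter_subset_right Set.inter_subset_right hdisjAB
      have : (C i).ncard = (C i ∩ A).ncard + (C i ∩ B).ncard := by
        conv_lhs => rw [hsplit]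
        exact Set.ncard_union_eq hdis (Set.toFinite _) (Set.toFinite _)
      omega
  refine ⟨key, {i | C i ⊆ A}, ?_, ?_⟩
  · ext v
    constructor
    · intro hv
      have : v ∈ ⋃ i, C i := by rw [hcover]; trivial
      obtain ⟨i, hi⟩ := Set.mem_iUnion.mp this
      rcases key i with hCA | hCB
      · exact Set.mem_biUnion hCA hi
      · exact absurd rfl (hdisjAB.ne_of_mem hv (hCB hi))
    · intro hv
      obtain ⟨i, hiI, hi⟩ := Set.mem_iUnion₂.mp hv
      exact hiI hi
  · ext v
    constructor
    · intro hv
      have : v ∈ ⋃ i, C i := by rw [hcover]; trivial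
      obtain ⟨i, hi⟩ := Set.mem_iUnion.mp this
      have : ¬ C i ⊆ A := fun hs => hdisjAB.ne_of_mem (hs hi) hv rfl
      exact Set.mem_biUnion this hi
    · intro hv
      obtain ⟨i, hiI, hi⟩ := Set.mem_iUnion₂.mp hv
      exact ((key i).resolve_left hiI) hi
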